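/- arXiv:1511.08595 — 5 statements merged into one kernel-verified Lean document; each statement's English description precedes it below -/
import Mathlib

section
/- Let ξ : ℤ → {0,1} be a non-periodic Toeplitz sequence with period structure (p_ℓ)_{ℓ≥1}, and let Ω be the associated odometer with Haar probability measure μ and distinguished element e. Then there exists a compact set W ⊆ Ω with W = cl(int(W)) (a proper window) such that {n ∈ ℤ : n·e ∈ W} = {n ∈ ℤ : ξ(n) = 1} and μ(∂W) = 1 − lim_{ℓ→∞} D(p_ℓ), where the limit exists because D(p_ℓ) is nondecreasing and bounded by 1. -/
open MeasureTheory Set Filter Topology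

noncomputable section

instance (n : ℕ) : TopologicalSpace (ZMod n) := ⊥
instance (n : ℕ) : DiscreteTopology (ZMod n) := ⟨rfl⟩
instance (n : ℕ) : MeasurableSpace (ZMod n) := ⊤

/-- The `p`-skeleton of a sequence `ξ : ℤ → {0,1}`:
the set of `p`-periodic positions of `ξ`. -/
def Per (ξ : ℤ → Fin 2) (p : ℕ) : Set ℤ := {k | ∀ n : ℤ, ξ (k + n * p) = ξ k}

/-- The density `D(p)` of the `p`-skeleton:
`D(p) = #(Per(p,ξ) ∩ [0, p-1]) / p`. -/
def skelDensity (ξ : ℤ → Fin 2) (p : ℕ) : ℝ :=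
  ((Per ξ p ∩ Set.Ico (0 : ℤ) (p : ℤ)).ncard : ℝ) / p

/-- `ξ` is a Toeplitz sequence: every position is periodic for some period `p ≥ 1`. -/
def IsToeplitz (ξ : ℤ → Fin 2) : Prop := ∀ k : ℤ, ∃ p : ℕ, 0 < p ∧ k ∈ Per ξ p

/-- `ξ` is non-periodic: no `p ≥ 1` is a period of the whole sequence. -/
def IsNonPeriodic (ξ : ℤ → Fin 2) : Prop := ∀ p : ℕ, 0 < p → ∃ k : ℤ, ξ (k + p) ≠ ξ k

/-- `(p ℓ)` is a period structure for `ξ`: the `p ℓ` are positive, each divides the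
next, and the `p ℓ`-skeletons exhaust `ℤ`. -/
def IsPeriodStructure (ξ : ℤ → Fin 2) (p : ℕ → ℕ) : Prop :=
  (∀ ℓ, 0 < p ℓ) ∧ (∀ ℓ, p ℓ ∣ p (ℓ + 1)) ∧ ∀ k : ℤ, ∃ ℓ, k ∈ Per ξ (p ℓ)

/-- The odometer associated with a scale `p`, i.e. the closed subgroup of
`∏ ℓ, ℤ/p ℓ ℤ` of sequences compatible under the canonical projections
(whenever `p ℓ ∣ p (ℓ+1)`, which holds for period structures). -/
def odometer (p : ℕ → ℕ) : AddSubgroup (Π ℓ, ZMod (p ℓ)) where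
  carrier := {x | ∀ ℓ, ∀ h : p ℓ ∣ p (ℓ + 1), ZMod.castHom h (ZMod (p ℓ)) (x (ℓ + 1)) = x ℓ}
  zero_mem' := by intro ℓ _; simp
  add_mem' := by intro a b ha hb ℓ h; simp only [Pi.add_apply, map_add, ha ℓ h, hb ℓ h]
  neg_mem' := by intro a ha ℓ h; simp only [Pi.neg_apply, map_neg, ha ℓ h]

/-- The distinguished element `e` of the odometer, whose `ℓ`-th coordinate is
`1 mod p ℓ`; its `n`-th multiple `n • e` has `ℓ`-th coordinate `n mod p ℓ`. -/
def odometerGen (p : ℕ → ℕ) : odometer p := ⟨fun _ => 1, fun _ _ => map_one _⟩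

/-- `A_s(ℓ) = {k mod p ℓ : k ∈ Per (p ℓ, ξ), ξ k = s} ⊆ ℤ/p ℓ ℤ`. -/
def Aset (ξ : ℤ → Fin 2) (p : ℕ → ℕ) (ℓ : ℕ) (s : Fin 2) : Set (ZMod (p ℓ)) :=
  {c | ∃ k : ℤ, k ∈ Per ξ (p ℓ) ∧ ξ k = s ∧ (k : ZMod (p ℓ)) = c}

/-- `U_ℓ = {x ∈ Ω : x ℓ ∈ A_1(ℓ)}`. -/
def UsetL (ξ : ℤ → Fin 2) (p : ℕ → ℕ) (ℓ : ℕ) : Set (odometer p) :=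
  {x | (x : Π ℓ, ZMod (p ℓ)) ℓ ∈ Aset ξ p ℓ 1}

/-- `V_ℓ = {x ∈ Ω : x ℓ ∈ A_0(ℓ)}`. -/
def VsetL (ξ : ℤ → Fin 2) (p : ℕ → ℕ) (ℓ : ℕ) : Set (odometer p) :=
  {x | (x : Π ℓ, ZMod (p ℓ)) ℓ ∈ Aset ξ p ℓ 0}

/-- `U = ⋃ ℓ, U_ℓ`. -/
def Uset (ξ : ℤ → Fin 2) (p : ℕ → ℕ) : Set (odometer p) := ⋃ ℓ, UsetL ξ p ℓ

/-- `V = ⋃ ℓ, V_ℓ`. -/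
def Vset (ξ : ℤ → Fin 2) (p : ℕ → ℕ) : Set (odometer p) := ⋃ ℓ, VsetL ξ p ℓ

/-- The window `W = cl(U)` constructed from `ξ`. -/
def Wset (ξ : ℤ → Fin 2) (p : ℕ → ℕ) : Set (odometer p) := closure (Uset ξ p)

/-! Write `U = Uset ξ p`, `V = Vset ξ p` and `e = odometerGen p`. Both `U` and `V` are open,
and they are disjoint because a residue of a `p ℓ`-skeleton determines the value of `ξ` on its
whole class. If `x ∉ V`, then no residue `x m` is a periodic class with value `0`, so every
class `x m` contains an integer `n` with `ξ n = 1`; such `n • e` lie in `U` and approximate `x`.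
Hence `cl U = Vᶜ` and symmetrically `cl V = Uᶜ`, so `int (cl U) = U` and `∂(cl U) = (U ∪ V)ᶜ`.
Finally `U ∪ V` is the increasing union over `ℓ` of the cylinders over the residues of the
`p ℓ`-skeleton, whose Haar measures are the densities `D(p ℓ)`. -/

open scoped ENNReal

section Odometer

variable {p : ℕ → ℕ}

lemma dvd_of_le_of_forall_dvd_succ (hd : ∀ ℓ, p ℓ ∣ p (ℓ + 1)) {i m : ℕ} (h : i ≤ m) :
    p i ∣ p m := by
  induction h with
  | refl => exact dvd_rfl
  | step _ ih => exact ih.trans (hd _)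

variable (p) in
def odometerCoord (ℓ : ℕ) : odometer p →+ ZMod (p ℓ) :=
  (Pi.evalAddMonoidHom (fun ℓ => ZMod (p ℓ)) ℓ).comp (odometer p).subtype

lemma odometerCoord_zsmul_odometerGen (n : ℤ) (ℓ : ℕ) :
    odometerCoord p ℓ (n • odometerGen p) = n := by
  rw [map_zsmul]
  exact zsmul_one n

lemma castHom_odometerCoord_succ (hd : ∀ ℓ, p ℓ ∣ p (ℓ + 1)) (ℓ : ℕ) (x : odometer p) :
    ZMod.castHom (hd ℓ) (ZMod (p ℓ)) (odometerCoord p (ℓ + 1) x) = odometerCoord p ℓ x :=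
  x.2 ℓ (hd ℓ)

lemma castHom_odometerCoord (hd : ∀ ℓ, p ℓ ∣ p (ℓ + 1)) {i m : ℕ} (h : i ≤ m) (x : odometer p) :
    ZMod.castHom (dvd_of_le_of_forall_dvd_succ hd h) (ZMod (p i)) (odometerCoord p m x) =
      odometerCoord p i x := by
  induction h with
  | refl => exact ZMod.cast_id _ _
  | @step m h ih =>
    rw [← ih, ← castHom_odometerCoord_succ hd m x]
    exact (DFunLike.congr_fun
      (ZMod.castHom_comp (dvd_of_le_of_forall_dvd_succ hd h) (hd m)) _).symm

lemma continuous_odometerCoord (ℓ : ℕ) : Continuous (odometerCoord p ℓ) :=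
  (continuous_apply ℓ).comp continuous_subtype_val

lemma measurable_odometerCoord (ℓ : ℕ) : Measurable (odometerCoord p ℓ) :=
  (measurable_pi_apply ℓ).comp measurable_subtype_coe

lemma isClosed_odometer : IsClosed (odometer p : Set (Π ℓ, ZMod (p ℓ))) := by
  have h : (odometer p : Set (Π ℓ, ZMod (p ℓ))) = ⋂ ℓ, ⋂ h : p ℓ ∣ p (ℓ + 1),
      {x | ZMod.castHom h (ZMod (p ℓ)) (x (ℓ + 1)) = x ℓ} := by
    ext x
    simp only [SetLike.mem_coe, mem_iInter]
    rfl
  rw [h]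
  exact isClosed_iInter fun ℓ => isClosed_iInter fun _ =>
    isClosed_eq (continuous_of_discreteTopology.comp (continuous_apply _)) (continuous_apply ℓ)

lemma compactSpace_odometer (hpos : ∀ ℓ, 0 < p ℓ) : CompactSpace (odometer p) := by
  have : ∀ ℓ, NeZero (p ℓ) := fun ℓ => ⟨(hpos ℓ).ne'⟩
  exact isCompact_iff_compactSpace.mp (isClosed_odometer (p := p)).isCompact

lemma exists_odometerCoord_eq_subset (hd : ∀ ℓ, p ℓ ∣ p (ℓ + 1)) {x : odometer p}
    {O : Set (odometer p)} (hO : O ∈ 𝓝 x) :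
    ∃ m, {y | odometerCoord p m y = odometerCoord p m x} ⊆ O := by
  obtain ⟨T, hT, hTO⟩ := (mem_nhds_subtype _ x O).mp hO
  rw [nhds_pi, Filter.mem_pi'] at hT
  obtain ⟨I, t, ht, hIt⟩ := hT
  refine ⟨I.sup id, fun y hy => hTO (hIt fun i hi => ?_)⟩
  have hi : i ≤ I.sup id := Finset.le_sup (f := id) hi
  have hyx : odometerCoord p i y = odometerCoord p i x := by
    rw [← castHom_odometerCoord hd hi, ← castHom_odometerCoord hd hi, hy.out]
  change odometerCoord p i y ∈ t i
  rw [hyx]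
  exact mem_of_mem_nhds (ht i)

lemma measurable_of_forall_measurable_odometerCoord {α : Type*} [MeasurableSpace α]
    {f : α → odometer p} (h : ∀ ℓ, Measurable fun a => odometerCoord p ℓ (f a)) : Measurable f :=
  (measurable_pi_lambda (fun a => (f a : Π ℓ, ZMod (p ℓ))) h).subtype_mk

instance (p : ℕ → ℕ) : MeasurableAdd (odometer p) where
  measurable_const_add c := measurable_of_forall_measurable_odometerCoord fun ℓ =>
    (measurable_from_top (f := fun z => odometerCoord p ℓ c + z)).comp
      (measurable_odometerCoord ℓ)
  measurable_add_const c := measurable_of_forall_measurable_odometerCoord fun ℓ =>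
    (measurable_from_top (f := fun z => z + odometerCoord p ℓ c)).comp
      (measurable_odometerCoord ℓ)

section Haar

variable (μ : Measure (odometer p)) [μ.IsAddLeftInvariant] [IsProbabilityMeasure μ]
  {ℓ : ℕ} [NeZero (p ℓ)]

/-- The fibres of `odometerCoord p ℓ` are translates of each other by multiples of `e`. -/
lemma measure_odometerCoord_preimage_singleton (c : ZMod (p ℓ)) :
    μ (odometerCoord p ℓ ⁻¹' {c}) = (p ℓ : ℝ≥0∞)⁻¹ := by
  have hfibre : ∀ c : ZMod (p ℓ),
      μ (odometerCoord p ℓ ⁻¹' {c}) = μ (odometerCoord p ℓ ⁻¹' {0}) := by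
    intro c
    obtain ⟨n, rfl⟩ := ZMod.intCast_surjective c
    have h : odometerCoord p ℓ ⁻¹' {0} =
        (fun y => n • odometerGen p + y) ⁻¹' (odometerCoord p ℓ ⁻¹' {(n : ZMod (p ℓ))}) := by
      ext y
      simp [odometerCoord_zsmul_odometerGen]
    rw [h, measure_preimage_add]
  have hsum : ∑ c : ZMod (p ℓ), μ (odometerCoord p ℓ ⁻¹' {c}) = 1 := by
    rw [sum_measure_preimage_singleton _ fun c _ =>
      measurable_odometerCoord ℓ (measurableSet_singleton c)]
    simp
  simp only [hfibre, Finset.sum_const, Finset.card_univ, ZMod.card, nsmul_eq_mul] at hsum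
  rw [hfibre]
  exact ENNReal.eq_inv_of_mul_eq_one_left (by rw [mul_comm]; exact hsum)

lemma measure_odometerCoord_preimage (S : Set (ZMod (p ℓ))) :
    μ (odometerCoord p ℓ ⁻¹' S) = S.ncard * (p ℓ : ℝ≥0∞)⁻¹ := by
  classical
  rw [← S.coe_toFinset, ← sum_measure_preimage_singleton _ fun c _ =>
    measurable_odometerCoord ℓ (measurableSet_singleton c)]
  simp only [measure_odometerCoord_preimage_singleton, Finset.sum_const, nsmul_eq_mul,
    Set.ncard_coe_finset]

end Haar

end Odometer

section Skeleton

variable {ξ : ℤ → Fin 2}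

lemma mem_Per_iff {q : ℕ} {k : ℤ} : k ∈ Per ξ q ↔ ∀ j : ℤ, (j : ZMod q) = k → ξ j = ξ k := by
  refine ⟨fun hk j hj => ?_, fun h n => h _ (by simp)⟩
  obtain ⟨t, ht⟩ := (ZMod.intCast_eq_intCast_iff_dvd_sub k j q).mp hj.symm
  rw [show j = k + t * q by linarith, hk t]

lemma mem_Per_of_intCast_eq {q : ℕ} {k j : ℤ} (hk : k ∈ Per ξ q) (hjk : (j : ZMod q) = k) :
    j ∈ Per ξ q :=
  mem_Per_iff.mpr fun i hi => by rw [mem_Per_iff.mp hk i (hi.trans hjk), mem_Per_iff.mp hk j hjk]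

lemma Per_subset_of_dvd {q r : ℕ} (h : q ∣ r) : Per ξ q ⊆ Per ξ r := by
  obtain ⟨d, rfl⟩ := h
  intro k hk n
  simpa [mul_assoc, mul_comm (d : ℤ)] using hk (n * d)

variable {p : ℕ → ℕ} {ℓ : ℕ}

lemma eq_of_mem_Aset {s t : Fin 2} {c : ZMod (p ℓ)} (hs : c ∈ Aset ξ p ℓ s)
    (ht : c ∈ Aset ξ p ℓ t) : s = t := by
  obtain ⟨k, hk, rfl, rfl⟩ := hs
  obtain ⟨j, -, rfl, hj⟩ := ht
  exact (mem_Per_iff.mp hk j hj).symm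

lemma mem_Aset_of_castHom_mem {m : ℕ} (h : p ℓ ∣ p m) {s : Fin 2} {c : ZMod (p m)}
    (hc : ZMod.castHom h (ZMod (p ℓ)) c ∈ Aset ξ p ℓ s) : c ∈ Aset ξ p m s := by
  obtain ⟨k, hk, rfl, hkc⟩ := hc
  have hjk : ((c.cast : ℤ) : ZMod (p ℓ)) = k := by
    rw [hkc, ← map_intCast (ZMod.castHom h (ZMod (p ℓ))), ZMod.intCast_zmod_cast]
  exact ⟨c.cast, Per_subset_of_dvd h (mem_Per_of_intCast_eq hk hjk),
    mem_Per_iff.mp hk _ hjk, ZMod.intCast_zmod_cast c⟩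

/-- A residue class on which `ξ` never takes the value `s` is a periodic class with value `t`. -/
lemma exists_apply_eq_of_notMem_Aset {s t : Fin 2} (hst : s ≠ t) {c : ZMod (p ℓ)}
    (hc : c ∉ Aset ξ p ℓ t) : ∃ n : ℤ, (n : ZMod (p ℓ)) = c ∧ ξ n = s := by
  by_contra! h
  obtain ⟨k, rfl⟩ := ZMod.intCast_surjective c
  have hval : ∀ j : ℤ, (j : ZMod (p ℓ)) = k → ξ j = t := fun j hj => by
    have := h j hj
    omega
  have hk : k ∈ Per ξ (p ℓ) := mem_Per_iff.mpr fun j hj => (hval j hj).trans (hval k rfl).symm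
  exact hc ⟨k, hk, hval k rfl, rfl⟩

lemma ncard_Per_inter_Ico [NeZero (p ℓ)] :
    (Per ξ (p ℓ) ∩ Ico 0 (p ℓ : ℤ)).ncard = (Aset ξ p ℓ 0 ∪ Aset ξ p ℓ 1).ncard := by
  have hp : (0 : ℤ) < p ℓ := by exact_mod_cast (NeZero.pos (p ℓ))
  have himage : (Int.cast : ℤ → ZMod (p ℓ)) '' (Per ξ (p ℓ) ∩ Ico 0 (p ℓ : ℤ)) =
      Aset ξ p ℓ 0 ∪ Aset ξ p ℓ 1 := by
    apply Subset.antisymm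
    · rintro _ ⟨k, ⟨hk, -⟩, rfl⟩
      rcases Fin.exists_fin_two.mp ⟨ξ k, rfl⟩ with h | h
      · exact Or.inl ⟨k, hk, h, rfl⟩
      · exact Or.inr ⟨k, hk, h, rfl⟩
    · rintro _ (⟨k, hk, -, rfl⟩ | ⟨k, hk, -, rfl⟩) <;>
        exact ⟨k % p ℓ, ⟨mem_Per_of_intCast_eq hk (ZMod.intCast_mod k _),
          Int.emod_nonneg k hp.ne', Int.emod_lt_of_pos k hp⟩, ZMod.intCast_mod k _⟩
  rw [← himage, ((CharP.intCast_injOn_Ico _ (p ℓ)).mono inter_subset_right).ncard_image]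

end Skeleton

section Window

variable {ξ : ℤ → Fin 2} {p : ℕ → ℕ}

def XsetL (ξ : ℤ → Fin 2) (p : ℕ → ℕ) (s : Fin 2) (ℓ : ℕ) : Set (odometer p) :=
  odometerCoord p ℓ ⁻¹' Aset ξ p ℓ s

def Xset (ξ : ℤ → Fin 2) (p : ℕ → ℕ) (s : Fin 2) : Set (odometer p) := ⋃ ℓ, XsetL ξ p s ℓ

lemma Uset_eq_Xset : Uset ξ p = Xset ξ p 1 := rfl

lemma Vset_eq_Xset : Vset ξ p = Xset ξ p 0 := rfl

lemma XsetL_mono (hd : ∀ ℓ, p ℓ ∣ p (ℓ + 1)) (s : Fin 2) : Monotone (XsetL ξ p s) :=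
  fun _ _ h x hx => mem_Aset_of_castHom_mem (dvd_of_le_of_forall_dvd_succ hd h)
    ((castHom_odometerCoord hd h x).symm ▸ hx)

lemma isOpen_Xset (s : Fin 2) : IsOpen (Xset ξ p s) :=
  isOpen_iUnion fun ℓ => (continuous_odometerCoord ℓ).isOpen_preimage _ (isOpen_discrete _)

lemma disjoint_Xset (hd : ∀ ℓ, p ℓ ∣ p (ℓ + 1)) {s t : Fin 2} (hst : s ≠ t) :
    Disjoint (Xset ξ p s) (Xset ξ p t) := by
  refine Set.disjoint_left.mpr fun x hs ht => hst ?_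
  obtain ⟨i, hi⟩ := mem_iUnion.mp hs
  obtain ⟨j, hj⟩ := mem_iUnion.mp ht
  exact eq_of_mem_Aset (XsetL_mono hd s (le_max_left i j) hi)
    (XsetL_mono hd t (le_max_right i j) hj)

lemma zsmul_odometerGen_mem_Xset_iff (hcover : ∀ k : ℤ, ∃ ℓ, k ∈ Per ξ (p ℓ)) {s : Fin 2}
    {n : ℤ} : n • odometerGen p ∈ Xset ξ p s ↔ ξ n = s := by
  constructor
  · intro hn
    obtain ⟨ℓ, k, hk, rfl, hkn⟩ := mem_iUnion.mp hn
    rw [odometerCoord_zsmul_odometerGen] at hkn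
    exact mem_Per_iff.mp hk n hkn.symm
  · intro hn
    obtain ⟨ℓ, hℓ⟩ := hcover n
    exact mem_iUnion.mpr ⟨ℓ, n, hℓ, hn, (odometerCoord_zsmul_odometerGen n ℓ).symm⟩

lemma compl_Xset_subset_closure (hd : ∀ ℓ, p ℓ ∣ p (ℓ + 1))
    (hcover : ∀ k : ℤ, ∃ ℓ, k ∈ Per ξ (p ℓ)) {s t : Fin 2} (hst : s ≠ t) :
    (Xset ξ p t)ᶜ ⊆ closure (Xset ξ p s) := by
  intro x hx
  rw [mem_closure_iff_nhds]
  intro O hO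
  obtain ⟨m, hm⟩ := exists_odometerCoord_eq_subset hd hO
  obtain ⟨n, hnx, hns⟩ :=
    exists_apply_eq_of_notMem_Aset hst fun h => hx (mem_iUnion.mpr ⟨m, h⟩)
  exact ⟨n • odometerGen p, hm ((odometerCoord_zsmul_odometerGen n m).trans hnx),
    (zsmul_odometerGen_mem_Xset_iff hcover).mpr hns⟩

lemma closure_Xset (hd : ∀ ℓ, p ℓ ∣ p (ℓ + 1)) (hcover : ∀ k : ℤ, ∃ ℓ, k ∈ Per ξ (p ℓ))
    {s t : Fin 2} (hst : s ≠ t) : closure (Xset ξ p s) = (Xset ξ p t)ᶜ :=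
  (closure_minimal (disjoint_Xset hd hst).subset_compl_right
    (isOpen_Xset t).isClosed_compl).antisymm (compl_Xset_subset_closure hd hcover hst)

lemma isClosed_Wset : IsClosed (Wset ξ p) := isClosed_closure

lemma Wset_eq_compl_Vset (hd : ∀ ℓ, p ℓ ∣ p (ℓ + 1))
    (hcover : ∀ k : ℤ, ∃ ℓ, k ∈ Per ξ (p ℓ)) : Wset ξ p = (Vset ξ p)ᶜ :=
  closure_Xset hd hcover one_ne_zero

lemma interior_Wset (hd : ∀ ℓ, p ℓ ∣ p (ℓ + 1)) (hcover : ∀ k : ℤ, ∃ ℓ, k ∈ Per ξ (p ℓ)) :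
    interior (Wset ξ p) = Uset ξ p := by
  rw [Wset_eq_compl_Vset hd hcover, interior_compl, Vset_eq_Xset,
    closure_Xset hd hcover zero_ne_one, compl_compl, Uset_eq_Xset]

lemma zsmul_odometerGen_mem_Wset_iff (hd : ∀ ℓ, p ℓ ∣ p (ℓ + 1))
    (hcover : ∀ k : ℤ, ∃ ℓ, k ∈ Per ξ (p ℓ)) {n : ℤ} :
    n • odometerGen p ∈ Wset ξ p ↔ ξ n = 1 := by
  rw [Wset_eq_compl_Vset hd hcover, mem_compl_iff, Vset_eq_Xset,
    zsmul_odometerGen_mem_Xset_iff hcover]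
  omega

def skelSet (ξ : ℤ → Fin 2) (p : ℕ → ℕ) (ℓ : ℕ) : Set (odometer p) :=
  XsetL ξ p 0 ℓ ∪ XsetL ξ p 1 ℓ

lemma monotone_skelSet (hd : ∀ ℓ, p ℓ ∣ p (ℓ + 1)) : Monotone (skelSet ξ p) :=
  fun _ _ h => union_subset_union (XsetL_mono hd 0 h) (XsetL_mono hd 1 h)

lemma measurableSet_skelSet (ℓ : ℕ) : MeasurableSet (skelSet ξ p ℓ) :=
  (measurable_odometerCoord ℓ trivial).union (measurable_odometerCoord ℓ trivial)

lemma frontier_Wset (hd : ∀ ℓ, p ℓ ∣ p (ℓ + 1)) (hcover : ∀ k : ℤ, ∃ ℓ, k ∈ Per ξ (p ℓ)) :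
    frontier (Wset ξ p) = (⋃ ℓ, skelSet ξ p ℓ)ᶜ := by
  rw [isClosed_Wset.frontier_eq, interior_Wset hd hcover, Wset_eq_compl_Vset hd hcover,
    sdiff_eq, ← compl_union]
  exact congrArg compl (iUnion_union_distrib _ _).symm

lemma skelDensity_eq_measureReal_skelSet (μ : Measure (odometer p)) [μ.IsAddLeftInvariant]
    [IsProbabilityMeasure μ] (ℓ : ℕ) [NeZero (p ℓ)] :
    skelDensity ξ (p ℓ) = μ.real (skelSet ξ p ℓ) := by
  rw [measureReal_def, skelSet, XsetL, XsetL, ← preimage_union, measure_odometerCoord_preimage,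
    skelDensity, ncard_Per_inter_Ico, ENNReal.toReal_mul, ENNReal.toReal_inv, div_eq_mul_inv]
  simp

end Window

lemma tendsto_measureReal_iUnion_atTop {α ι : Type*} [MeasurableSpace α] {μ : Measure α}
    [IsFiniteMeasure μ] [Preorder ι] [(atTop : Filter ι).IsCountablyGenerated] {s : ι → Set α}
    (hs : Monotone s) :
    Tendsto (fun n => μ.real (s n)) atTop (𝓝 (μ.real (⋃ n, s n))) :=
  (ENNReal.tendsto_toReal (measure_ne_top μ _)).comp (tendsto_measure_iUnion_atTop hs)

theorem toeplitz_model_set_general (ξ : ℤ → Fin 2)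
    (p : ℕ → ℕ) (hps : IsPeriodStructure ξ p)
    (μ : Measure (odometer p)) (hμ : μ.IsAddHaarMeasure) (hμ1 : IsProbabilityMeasure μ) :
    ∃ W : Set (odometer p), IsCompact W ∧ W = closure (interior W) ∧
      {n : ℤ | n • odometerGen p ∈ W} = {n : ℤ | ξ n = 1} ∧
      ∃ L : ℝ, Tendsto (fun ℓ => skelDensity ξ (p ℓ)) atTop (𝓝 L) ∧
        Monotone (fun ℓ => skelDensity ξ (p ℓ)) ∧ (∀ ℓ, skelDensity ξ (p ℓ) ≤ 1) ∧
        μ (frontier W) = ENNReal.ofReal (1 - L) := by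
  obtain ⟨hpos, hd, hcover⟩ := hps
  have : ∀ ℓ, NeZero (p ℓ) := fun ℓ => ⟨(hpos ℓ).ne'⟩
  have : CompactSpace (odometer p) := compactSpace_odometer hpos
  have hD : ∀ ℓ, skelDensity ξ (p ℓ) = μ.real (skelSet ξ p ℓ) :=
    fun ℓ => skelDensity_eq_measureReal_skelSet μ ℓ
  refine ⟨Wset ξ p, isClosed_Wset.isCompact, by rw [interior_Wset hd hcover]; rfl,
    Set.ext fun n => zsmul_odometerGen_mem_Wset_iff hd hcover, μ.real (⋃ ℓ, skelSet ξ p ℓ),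
    ?_, fun i j h => ?_, fun ℓ => ?_, ?_⟩
  · simpa only [hD] using tendsto_measureReal_iUnion_atTop (monotone_skelSet hd)
  · simpa only [hD] using measureReal_mono (monotone_skelSet hd h)
  · simpa only [hD] using measureReal_le_one
  · rw [frontier_Wset hd hcover,
      prob_compl_eq_one_sub (MeasurableSet.iUnion measurableSet_skelSet),
      ENNReal.ofReal_sub _ measureReal_nonneg, ENNReal.ofReal_one, ofReal_measureReal]

/-- For a non-periodic Toeplitz sequence `ξ` with period structure
`(p ℓ)`, with `Ω` the associated odometer, `μ` its Haar probability measure and `e`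
the distinguished element, there is a compact proper window `W ⊆ Ω` with
`{n : n • e ∈ W} = {n : ξ n = 1}` and `μ (∂W) = 1 - lim_ℓ D(p ℓ)`
(the limit existing since `D(p ℓ)` is nondecreasing and bounded by `1`). -/
theorem toeplitz_model_set (ξ : ℤ → Fin 2) (hT : IsToeplitz ξ) (hNP : IsNonPeriodic ξ)
    (p : ℕ → ℕ) (hps : IsPeriodStructure ξ p)
    (μ : Measure (odometer p)) (hμ : μ.IsAddHaarMeasure) (hμ1 : IsProbabilityMeasure μ) :
    ∃ W : Set (odometer p), IsCompact W ∧ W = closure (interior W) ∧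
      {n : ℤ | n • odometerGen p ∈ W} = {n : ℤ | ξ n = 1} ∧
      ∃ L : ℝ, Tendsto (fun ℓ => skelDensity ξ (p ℓ)) atTop (𝓝 L) ∧
        Monotone (fun ℓ => skelDensity ξ (p ℓ)) ∧ (∀ ℓ, skelDensity ξ (p ℓ) ≤ 1) ∧
        μ (frontier W) = ENNReal.ofReal (1 - L) :=
  toeplitz_model_set_general ξ p hps μ hμ hμ1
end
end

section
/- Let ξ : ℤ → {0,1} be a non-periodic Toeplitz sequence with period structure (p_ℓ)_{ℓ≥1}, Ω the associated odometer with distinguished element e, and W = cl(U) the window constructed from ξ. Then {n ∈ ℤ : n·e ∈ W} = {n ∈ ℤ : ξ(n) = 1}. -/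
open MeasureTheory Set Filter Topology

noncomputable section

/-!
Both directions are read off at a single level `ℓ` with `n ∈ Per(p_ℓ, ξ)`. If `ξ n = 1` then
`n • e ∈ U_ℓ ⊆ W`. If `ξ n = 0` then `n • e` lies in `V_ℓ`, which is open because it depends on one
coordinate only, and disjoint from `U`: a point in `U_m ∩ V_ℓ` has a coordinate at level
`max ℓ m` represented by some integer `r`, and `ξ r` would have to be both `1` and `0`.
Hence `n • e ∉ cl(U) = W`.
-/


section Toeplitz

variable {ξ : ℤ → Fin 2} {p : ℕ → ℕ}

lemma apply_eq_of_mem_Per_of_intCast_eq {q : ℕ} {k r : ℤ} (hk : k ∈ Per ξ q)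
    (h : (r : ZMod q) = (k : ZMod q)) : ξ r = ξ k := by
  obtain ⟨m, hm⟩ := (ZMod.intCast_eq_intCast_iff_dvd_sub r k q).mp h
  rw [show r = k + -m * q by linarith]
  exact hk (-m)

lemma intCast_mem_Aset {ℓ : ℕ} {n : ℤ} (hn : n ∈ Per ξ (p ℓ)) :
    (n : ZMod (p ℓ)) ∈ Aset ξ p ℓ (ξ n) :=
  ⟨n, hn, rfl, rfl⟩

lemma odometer_intCast_coord_of_le (hdvd : ∀ ℓ, p ℓ ∣ p (ℓ + 1)) (x : odometer p)
    {ℓ L : ℕ} (hℓL : ℓ ≤ L) {k : ℤ} (hk : (k : ZMod (p L)) = (x : Π i, ZMod (p i)) L) :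
    (k : ZMod (p ℓ)) = (x : Π i, ZMod (p i)) ℓ := by
  induction L, hℓL using Nat.le_induction with
  | base => exact hk
  | succ L _ ih => exact ih (by rw [← x.2 L (hdvd L), ← hk, map_intCast])

lemma odometerGen_zsmul_apply (n : ℤ) (ℓ : ℕ) :
    ((n • odometerGen p : odometer p) : Π i, ZMod (p i)) ℓ = (n : ZMod (p ℓ)) := by
  change (n • fun _ => (1 : ZMod (p _))) ℓ = _
  simp

lemma isOpen_VsetL (ℓ : ℕ) : IsOpen (VsetL ξ p ℓ) :=
  (isOpen_discrete (Aset ξ p ℓ 0)).preimage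
    ((continuous_apply ℓ).comp continuous_subtype_val)

lemma disjoint_VsetL_UsetL (hdvd : ∀ ℓ, p ℓ ∣ p (ℓ + 1)) (ℓ m : ℕ) :
    Disjoint (VsetL ξ p ℓ) (UsetL ξ p m) := by
  refine Set.disjoint_left.mpr fun x ⟨k, hkPer, hk0, hkx⟩ ⟨j, hjPer, hj1, hjx⟩ => ?_
  obtain ⟨r, hr⟩ := ZMod.intCast_surjective ((x : Π i, ZMod (p i)) (max ℓ m))
  have hr0 : ξ r = 0 := hk0 ▸ apply_eq_of_mem_Per_of_intCast_eq hkPer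
    (by rw [odometer_intCast_coord_of_le hdvd x (le_max_left ℓ m) hr, hkx])
  have hr1 : ξ r = 1 := hj1 ▸ apply_eq_of_mem_Per_of_intCast_eq hjPer
    (by rw [odometer_intCast_coord_of_le hdvd x (le_max_right ℓ m) hr, hjx])
  exact absurd (hr0.symm.trans hr1) (by decide)

lemma disjoint_VsetL_Wset (hdvd : ∀ ℓ, p ℓ ∣ p (ℓ + 1)) (ℓ : ℕ) :
    Disjoint (VsetL ξ p ℓ) (Wset ξ p) :=
  (Set.disjoint_iUnion_right.mpr (disjoint_VsetL_UsetL hdvd ℓ)).closure_right (isOpen_VsetL ℓ)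

end Toeplitz

theorem toeplitz_window_points_general (ξ : ℤ → Fin 2)
    (p : ℕ → ℕ) (hps : IsPeriodStructure ξ p) :
    {n : ℤ | n • odometerGen p ∈ Wset ξ p} = {n : ℤ | ξ n = 1} := by
  obtain ⟨-, hdvd, hskel⟩ := hps
  ext n
  obtain ⟨ℓ, hnPer⟩ := hskel n
  have hcoord : (n : ZMod (p ℓ)) ∈ Aset ξ p ℓ (ξ n) := intCast_mem_Aset hnPer
  rw [← odometerGen_zsmul_apply n ℓ] at hcoord
  constructor
  · intro hW
    by_contra hn1
    change ξ n ≠ 1 at hn1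
    have hn0 : ξ n = 0 := by omega
    rw [hn0] at hcoord
    exact Set.disjoint_left.mp (disjoint_VsetL_Wset hdvd ℓ) hcoord hW
  · intro (hn1 : ξ n = 1)
    rw [hn1] at hcoord
    exact subset_closure (Set.mem_iUnion.mpr ⟨ℓ, hcoord⟩)

/-- For a non-periodic Toeplitz sequence `ξ` with period structure
`(p ℓ)`, window `W = cl U` in the associated odometer, and distinguished element `e`:
`{n : n • e ∈ W} = {n : ξ n = 1}`. -/
theorem toeplitz_window_points (ξ : ℤ → Fin 2) (hT : IsToeplitz ξ) (hNP : IsNonPeriodic ξ)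
    (p : ℕ → ℕ) (hps : IsPeriodStructure ξ p) :
    {n : ℤ | n • odometerGen p ∈ Wset ξ p} = {n : ℤ | ξ n = 1} :=
  toeplitz_window_points_general ξ p hps
end
end

section
/- Let ξ : ℤ → {0,1} be a Toeplitz sequence with period structure (p_ℓ)_{ℓ≥1}, Ω the associated odometer with distinguished element e, and U, V the sets constructed from ξ. Then: (i) U and V are disjoint open subsets of Ω; (ii) for every k ∈ ℤ, if ξ(k) = 1 then k·e ∈ U, and if ξ(k) = 0 then k·e ∈ V. -/
open MeasureTheory Set Filter Topology

noncomputable section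

/-! In the odometer a coordinate `x m = j` forces every coarser coordinate `x ℓ = j`, `ℓ ≤ m`.
So if `x ℓ` is the residue of a `p ℓ`-periodic position `k`, every `j` with `x m = j` lies in
`k + p ℓ ℤ`, on which `ξ` is constant; hence no point lies in both `U_ℓ` and `V_m`.
Openness holds because each `U_ℓ`, `V_ℓ` depends on one coordinate, in a discrete factor. -/

theorem Per.apply_eq_of_intCast_eq {ξ : ℤ → Fin 2} {q : ℕ} {k j : ℤ} (hk : k ∈ Per ξ q)
    (hkj : (k : ZMod q) = j) : ξ j = ξ k := by
  obtain ⟨n, hn⟩ := ((ZMod.intCast_eq_intCast_iff _ _ _).mp hkj).symm.dvd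
  rw [show j = k + -n * q by linear_combination -hn, hk]

namespace odometer

variable {p : ℕ → ℕ}

theorem coe_apply_eq_of_le (hdvd : ∀ ℓ, p ℓ ∣ p (ℓ + 1)) (x : odometer p) {ℓ m : ℕ}
    (hℓm : ℓ ≤ m) {j : ℤ} (hx : (x : Π i, ZMod (p i)) m = j) :
    (x : Π i, ZMod (p i)) ℓ = j := by
  induction m, hℓm using Nat.le_induction generalizing j with
  | base => exact hx
  | succ m _ ih =>
    refine ih ?_
    rw [← x.2 m (hdvd m), hx, map_intCast]

theorem isOpen_setOf_coe_apply_mem (ℓ : ℕ) (S : Set (ZMod (p ℓ))) :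
    IsOpen {x : odometer p | (x : Π i, ZMod (p i)) ℓ ∈ S} :=
  (isOpen_discrete S).preimage ((continuous_apply ℓ).comp continuous_subtype_val)

@[simp]
theorem coe_zsmul_odometerGen_apply (k : ℤ) (ℓ : ℕ) :
    ((k • odometerGen p : odometer p) : Π i, ZMod (p i)) ℓ = k := by
  simp [odometerGen]

end odometer

section UV

variable {ξ : ℤ → Fin 2} {p : ℕ → ℕ}

theorem eq_of_coe_apply_mem_Aset (hdvd : ∀ ℓ, p ℓ ∣ p (ℓ + 1)) (x : odometer p)
    {ℓ m : ℕ} (hℓm : ℓ ≤ m) {s t : Fin 2} (hs : (x : Π i, ZMod (p i)) ℓ ∈ Aset ξ p ℓ s)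
    (ht : (x : Π i, ZMod (p i)) m ∈ Aset ξ p m t) : s = t := by
  obtain ⟨k, hkPer, rfl, hxk⟩ := hs
  obtain ⟨j, -, rfl, hxj⟩ := ht
  refine (Per.apply_eq_of_intCast_eq hkPer ?_).symm
  rw [hxk, odometer.coe_apply_eq_of_le hdvd x hℓm hxj.symm]

theorem disjoint_UsetL_VsetL (hdvd : ∀ ℓ, p ℓ ∣ p (ℓ + 1)) (ℓ m : ℕ) :
    Disjoint (UsetL ξ p ℓ) (VsetL ξ p m) := by
  refine Set.disjoint_left.mpr fun x hU hV => ?_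
  rcases le_total ℓ m with h | h
  · exact absurd (eq_of_coe_apply_mem_Aset hdvd x h hU hV) (by decide)
  · exact absurd (eq_of_coe_apply_mem_Aset hdvd x h hV hU) (by decide)

theorem disjoint_Uset_Vset (hdvd : ∀ ℓ, p ℓ ∣ p (ℓ + 1)) :
    Disjoint (Uset ξ p) (Vset ξ p) :=
  Set.disjoint_iUnion_left.mpr fun ℓ =>
    Set.disjoint_iUnion_right.mpr fun m => disjoint_UsetL_VsetL hdvd ℓ m

theorem isOpen_Uset : IsOpen (Uset ξ p) :=
  isOpen_iUnion fun ℓ => odometer.isOpen_setOf_coe_apply_mem ℓ _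

theorem isOpen_Vset : IsOpen (Vset ξ p) :=
  isOpen_iUnion fun ℓ => odometer.isOpen_setOf_coe_apply_mem ℓ _

theorem coe_zsmul_odometerGen_apply_mem_Aset {k : ℤ} {ℓ : ℕ} (hk : k ∈ Per ξ (p ℓ))
    {s : Fin 2} (hs : ξ k = s) :
    ((k • odometerGen p : odometer p) : Π i, ZMod (p i)) ℓ ∈ Aset ξ p ℓ s :=
  ⟨k, hk, hs, (odometer.coe_zsmul_odometerGen_apply k ℓ).symm⟩

end UV

theorem toeplitz_UV_open_disjoint_general (ξ : ℤ → Fin 2)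
    (p : ℕ → ℕ) (hps : IsPeriodStructure ξ p) :
    Disjoint (Uset ξ p) (Vset ξ p) ∧ IsOpen (Uset ξ p) ∧ IsOpen (Vset ξ p) ∧
      ∀ k : ℤ, (ξ k = 1 → k • odometerGen p ∈ Uset ξ p) ∧
        (ξ k = 0 → k • odometerGen p ∈ Vset ξ p) := by
  obtain ⟨-, hdvd, hcover⟩ := hps
  refine ⟨disjoint_Uset_Vset hdvd, isOpen_Uset, isOpen_Vset, fun k => ?_⟩
  obtain ⟨ℓ, hℓ⟩ := hcover k
  exact ⟨fun h1 => Set.mem_iUnion.mpr ⟨ℓ, coe_zsmul_odometerGen_apply_mem_Aset hℓ h1⟩,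
    fun h0 => Set.mem_iUnion.mpr ⟨ℓ, coe_zsmul_odometerGen_apply_mem_Aset hℓ h0⟩⟩

/-- For a Toeplitz sequence `ξ` with period structure `(p ℓ)` and
distinguished odometer element `e`: (i) `U` and `V` are disjoint open sets;
(ii) if `ξ k = 1` then `k • e ∈ U`, and if `ξ k = 0` then `k • e ∈ V`. -/
theorem toeplitz_UV_open_disjoint (ξ : ℤ → Fin 2) (hT : IsToeplitz ξ)
    (p : ℕ → ℕ) (hps : IsPeriodStructure ξ p) :
    Disjoint (Uset ξ p) (Vset ξ p) ∧ IsOpen (Uset ξ p) ∧ IsOpen (Vset ξ p) ∧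
      ∀ k : ℤ, (ξ k = 1 → k • odometerGen p ∈ Uset ξ p) ∧
        (ξ k = 0 → k • odometerGen p ∈ Vset ξ p) :=
  toeplitz_UV_open_disjoint_general ξ p hps
end
end

section
/- Let ξ : ℤ → {0,1} be a non-periodic Toeplitz sequence with period structure (p_ℓ)_{ℓ≥1}, Ω the associated odometer, and U, V the sets constructed from ξ. Then cl(U) = Ω \ V and cl(V) = Ω \ U, where cl denotes closure in Ω. -/
open MeasureTheory Set Filter Topology

noncomputable section

/-!
A residue class mod `p ℓ` meeting the `p ℓ`-skeleton lies in it and is constant, and it stays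
so at every finer level; hence `U` and `V` are disjoint open sets. Conversely, if `x ∉ V`, then
for each level `L` the class of `x_L` mod `p_L` is not entirely `0`, so it contains some `k`
with `ξ k = 1`. This `k` is `p_m`-periodic for some `m`, so the image of `k` in `Ω` lies in
`U_m`, and it agrees with `x` at all levels `≤ L`.
-/

lemma mem_Aset_iff {ξ : ℤ → Fin 2} {p : ℕ → ℕ} {ℓ : ℕ} {s : Fin 2} {c : ZMod (p ℓ)} :
    c ∈ Aset ξ p ℓ s ↔ ∀ j : ℤ, (j : ZMod (p ℓ)) = c → ξ j = s := by
  constructor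
  · rintro ⟨k, hkPer, hks, rfl⟩ j hj
    obtain ⟨n, hn⟩ := (ZMod.intCast_eq_intCast_iff_dvd_sub k j (p ℓ)).mp hj.symm
    rw [show j = k + n * p ℓ by linarith, hkPer n, hks]
  · intro h
    obtain ⟨k, rfl⟩ := ZMod.intCast_surjective c
    refine ⟨k, fun n => ?_, h k rfl, rfl⟩
    rw [h k rfl, h _ (by simp)]

lemma disjoint_Aset {ξ : ℤ → Fin 2} {p : ℕ → ℕ} {ℓ : ℕ} {s t : Fin 2} (hst : s ≠ t) :
    Disjoint (Aset ξ p ℓ s) (Aset ξ p ℓ t) := by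
  refine Set.disjoint_left.mpr fun c hs ht => hst ?_
  obtain ⟨k, rfl⟩ := ZMod.intCast_surjective c
  rw [← mem_Aset_iff.mp hs k rfl, mem_Aset_iff.mp ht k rfl]

lemma odometer.intCast_coord_of_le {p : ℕ → ℕ} (hd : ∀ ℓ, p ℓ ∣ p (ℓ + 1)) (x : odometer p)
    {ℓ m : ℕ} (hℓm : ℓ ≤ m) {k : ℤ} (hk : (k : ZMod (p m)) = x.1 m) :
    (k : ZMod (p ℓ)) = x.1 ℓ := by
  induction m, hℓm using Nat.le_induction with
  | base => exact hk
  | succ n _ ih =>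
    apply ih
    rw [← x.2 n (hd n), ← hk, map_intCast]

lemma odometer.mem_Aset_coord_of_le {ξ : ℤ → Fin 2} {p : ℕ → ℕ} (hd : ∀ ℓ, p ℓ ∣ p (ℓ + 1))
    (x : odometer p) {ℓ m : ℕ} (hℓm : ℓ ≤ m) {s : Fin 2} (hx : x.1 ℓ ∈ Aset ξ p ℓ s) :
    x.1 m ∈ Aset ξ p m s :=
  mem_Aset_iff.mpr fun j hj =>
    mem_Aset_iff.mp hx j (odometer.intCast_coord_of_le hd x hℓm hj)

lemma mem_closure_of_forall_exists_eq_of_le {E : ℕ → Type*} [∀ i, TopologicalSpace (E i)]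
    [∀ i, DiscreteTopology (E i)] {S : Set (Π i, E i)} {x : Π i, E i}
    (h : ∀ L, ∃ y ∈ S, ∀ i ≤ L, y i = x i) : x ∈ closure S := by
  refine mem_closure_iff.mpr fun O hO hxO => ?_
  obtain ⟨I, u, hu, hIuO⟩ := isOpen_pi_iff.mp hO x hxO
  obtain ⟨y, hyS, hyx⟩ := h (I.sup id)
  refine ⟨y, hIuO fun i hi => ?_, hyS⟩
  rw [hyx i (Finset.le_sup (f := id) hi)]
  exact (hu i hi).2

/-- `Uset ξ p = skeletonSet ξ p 1` and `Vset ξ p = skeletonSet ξ p 0`. -/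
def skeletonSet (ξ : ℤ → Fin 2) (p : ℕ → ℕ) (s : Fin 2) : Set (odometer p) :=
  ⋃ ℓ, {x | x.1 ℓ ∈ Aset ξ p ℓ s}

lemma isOpen_skeletonSet (ξ : ℤ → Fin 2) (p : ℕ → ℕ) (s : Fin 2) :
    IsOpen (skeletonSet ξ p s) :=
  isOpen_iUnion fun ℓ =>
    ((continuous_apply ℓ).comp continuous_subtype_val).isOpen_preimage _ (isOpen_discrete _)

lemma disjoint_skeletonSet {ξ : ℤ → Fin 2} {p : ℕ → ℕ} (hd : ∀ ℓ, p ℓ ∣ p (ℓ + 1))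
    {s t : Fin 2} (hst : s ≠ t) : Disjoint (skeletonSet ξ p s) (skeletonSet ξ p t) := by
  refine Set.disjoint_left.mpr fun x hs ht => ?_
  obtain ⟨ℓ, hℓ⟩ := Set.mem_iUnion.mp hs
  obtain ⟨m, hm⟩ := Set.mem_iUnion.mp ht
  exact (disjoint_Aset hst).ne_of_mem (odometer.mem_Aset_coord_of_le hd x (le_max_left ℓ m) hℓ)
    (odometer.mem_Aset_coord_of_le hd x (le_max_right ℓ m) hm) rfl

lemma compl_subset_closure_skeletonSet {ξ : ℤ → Fin 2} {p : ℕ → ℕ}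
    (hd : ∀ ℓ, p ℓ ∣ p (ℓ + 1)) (hcov : ∀ k : ℤ, ∃ ℓ, k ∈ Per ξ (p ℓ)) {s t : Fin 2}
    (hst : s ≠ t) : (skeletonSet ξ p t)ᶜ ⊆ closure (skeletonSet ξ p s) := by
  intro x hx
  rw [closure_subtype]
  refine mem_closure_of_forall_exists_eq_of_le fun L => ?_
  have hxL : x.1 L ∉ Aset ξ p L t := fun h => hx (Set.mem_iUnion.mpr ⟨L, h⟩)
  obtain ⟨k, hkx, hkt⟩ : ∃ k : ℤ, (k : ZMod (p L)) = x.1 L ∧ ξ k ≠ t := by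
    simpa [mem_Aset_iff] using hxL
  obtain ⟨m, hkPer⟩ := hcov k
  refine ⟨(k • odometerGen p : odometer p), ⟨_, Set.mem_iUnion.mpr ⟨m, ?_⟩, rfl⟩, ?_⟩
  · have hks : ξ k = s := by omega
    exact ⟨k, hkPer, hks, by simp [odometerGen]⟩
  · intro i hi
    simpa [odometerGen] using odometer.intCast_coord_of_le hd x hi hkx

lemma closure_skeletonSet {ξ : ℤ → Fin 2} {p : ℕ → ℕ} (hd : ∀ ℓ, p ℓ ∣ p (ℓ + 1))
    (hcov : ∀ k : ℤ, ∃ ℓ, k ∈ Per ξ (p ℓ)) {s t : Fin 2} (hst : s ≠ t) :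
    closure (skeletonSet ξ p s) = (skeletonSet ξ p t)ᶜ :=
  (closure_minimal (disjoint_skeletonSet hd hst).subset_compl_right
    (isOpen_skeletonSet ξ p t).isClosed_compl).antisymm
    (compl_subset_closure_skeletonSet hd hcov hst)

theorem toeplitz_closure_complement_general (ξ : ℤ → Fin 2) (p : ℕ → ℕ) (hps : IsPeriodStructure ξ p) :
    closure (Uset ξ p) = (Vset ξ p)ᶜ ∧ closure (Vset ξ p) = (Uset ξ p)ᶜ := by
  obtain ⟨-, hd, hcov⟩ := hps
  exact ⟨closure_skeletonSet hd hcov (by decide), closure_skeletonSet hd hcov (by decide)⟩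

/-- For a non-periodic Toeplitz sequence `ξ` with period structure
`(p ℓ)`, in the associated odometer one has `cl U = Ω \ V` and `cl V = Ω \ U`. -/
theorem toeplitz_closure_complement (ξ : ℤ → Fin 2) (hT : IsToeplitz ξ)
    (hNP : IsNonPeriodic ξ) (p : ℕ → ℕ) (hps : IsPeriodStructure ξ p) :
    closure (Uset ξ p) = (Vset ξ p)ᶜ ∧ closure (Vset ξ p) = (Uset ξ p)ᶜ :=
  toeplitz_closure_complement_general ξ p hps
end
end

section
/- Let ξ : ℤ → {0,1} be a non-periodic Toeplitz sequence with period structure (p_ℓ)_{ℓ≥1}, Ω the associated odometer, and U_ℓ, V_ℓ, U, V, W = cl(U) the sets constructed from ξ. Then for every ℓ ≥ 1: (i) ∂W ⊆ Ω \ (U_ℓ ∪ V_ℓ); (ii) Ω \ (U_ℓ ∪ V_ℓ) is the union of the level-ℓ cylinders {x ∈ Ω : x_ℓ = c} with c ∉ A_0(ℓ) ∪ A_1(ℓ), and the number of such cylinders is exactly p_ℓ − #(Per(p_ℓ, ξ) ∩ [0, p_ℓ−1]) = (1 − D(p_ℓ))·p_ℓ. In particular, ∂W can be covered by (1 − D(p_ℓ))·p_ℓ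 level-ℓ cylinders. -/
open MeasureTheory Set Filter Topology

noncomputable section

/-!
An integer lift `j` of a coordinate `x ℓ ∈ A_s(ℓ)` has `ξ j = s`, because `A_s(ℓ)` is read off the
`p ℓ`-periodic part of `ξ`. Lifting `x` at level `max ℓ m` lifts it at levels `ℓ` and `m` at once,
so `V_ℓ` misses every `U_m`. As `U_ℓ` and `V_ℓ` are open (unions of cylinders), `U_ℓ ⊆ int W` and
`V_ℓ ∩ W = ∅`, so `∂W` avoids both. The count holds because reduction mod `p ℓ` maps the
`p ℓ`-skeleton inside `[0, p ℓ)` bijectively onto `A_0(ℓ) ∪ A_1(ℓ)`.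
-/

lemma mem_Per_of_modEq {ξ : ℤ → Fin 2} {q : ℕ} {j k : ℤ} (hk : k ∈ Per ξ q)
    (hjk : j ≡ k [ZMOD q]) : j ∈ Per ξ q ∧ ξ j = ξ k := by
  obtain ⟨n, hn⟩ := Int.ModEq.dvd hjk.symm
  have hj : j = k + n * q := by linarith
  have hval : ξ j = ξ k := by rw [hj]; exact hk n
  refine ⟨fun m => ?_, hval⟩
  rw [hval, hj, add_assoc, ← add_mul]
  exact hk (n + m)

lemma eq_of_intCast_mem_Aset {ξ : ℤ → Fin 2} {p : ℕ → ℕ} {ℓ : ℕ} {s : Fin 2} {j : ℤ}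
    (hj : (j : ZMod (p ℓ)) ∈ Aset ξ p ℓ s) : ξ j = s := by
  obtain ⟨k, hk, hks, hkj⟩ := hj
  rw [ZMod.intCast_eq_intCast_iff] at hkj
  rw [(mem_Per_of_modEq hk hkj.symm).2, hks]

lemma intCast_eq_coord_of_le {p : ℕ → ℕ} (hdvd : ∀ ℓ, p ℓ ∣ p (ℓ + 1)) (x : odometer p)
    {j : ℤ} {ℓ m : ℕ} (hℓm : ℓ ≤ m) (hj : (j : ZMod (p m)) = (x : Π ℓ, ZMod (p ℓ)) m) :
    (j : ZMod (p ℓ)) = (x : Π ℓ, ZMod (p ℓ)) ℓ := by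
  induction m, hℓm using Nat.le_induction with
  | base => exact hj
  | succ m _ ih =>
    refine ih ?_
    rw [← x.2 m (hdvd m), ← hj, map_intCast]

lemma disjoint_VsetL_Uset {ξ : ℤ → Fin 2} {p : ℕ → ℕ} (hdvd : ∀ ℓ, p ℓ ∣ p (ℓ + 1))
    (ℓ : ℕ) : Disjoint (VsetL ξ p ℓ) (Uset ξ p) := by
  refine Set.disjoint_iUnion_right.2 fun m => Set.disjoint_left.2 fun x hV hU => ?_
  obtain ⟨j, hj⟩ := ZMod.intCast_surjective ((x : Π ℓ, ZMod (p ℓ)) (max ℓ m))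
  have h0 : ξ j = 0 := eq_of_intCast_mem_Aset <| by
    rw [intCast_eq_coord_of_le hdvd x (le_max_left ℓ m) hj]; exact hV
  have h1 : ξ j = 1 := eq_of_intCast_mem_Aset <| by
    rw [intCast_eq_coord_of_le hdvd x (le_max_right ℓ m) hj]; exact hU
  exact absurd (h0.symm.trans h1) (by decide)

lemma isOpen_setOf_coord_mem {p : ℕ → ℕ} (ℓ : ℕ) (S : Set (ZMod (p ℓ))) :
    IsOpen {x : odometer p | (x : Π ℓ, ZMod (p ℓ)) ℓ ∈ S} :=
  (isOpen_discrete S).preimage ((continuous_apply ℓ).comp continuous_subtype_val)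

lemma frontier_closure_subset_compl_union {X : Type*} [TopologicalSpace X] {s U V : Set X}
    (hU : IsOpen U) (hUs : U ⊆ s) (hV : IsOpen V) (hVs : Disjoint V s) :
    frontier (closure s) ⊆ (U ∪ V)ᶜ := by
  intro x hx hxUV
  have hx' : x ∈ closure s \ interior s := frontier_closure_subset hx
  rcases hxUV with hxU | hxV
  · exact hx'.2 (interior_maximal hUs hU hxU)
  · exact Set.disjoint_left.1 (hVs.closure_right hV) hxV hx'.1

lemma frontier_Wset_subset {ξ : ℤ → Fin 2} {p : ℕ → ℕ} (hdvd : ∀ ℓ, p ℓ ∣ p (ℓ + 1))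
    (ℓ : ℕ) : frontier (Wset ξ p) ⊆ (UsetL ξ p ℓ ∪ VsetL ξ p ℓ)ᶜ :=
  frontier_closure_subset_compl_union (isOpen_setOf_coord_mem ℓ _)
    (Set.subset_iUnion (UsetL ξ p) ℓ) (isOpen_setOf_coord_mem ℓ _) (disjoint_VsetL_Uset hdvd ℓ)

lemma UsetL_union_VsetL (ξ : ℤ → Fin 2) (p : ℕ → ℕ) (ℓ : ℕ) :
    UsetL ξ p ℓ ∪ VsetL ξ p ℓ =
      (fun x : odometer p => (x : Π ℓ, ZMod (p ℓ)) ℓ) ⁻¹' (Aset ξ p ℓ 0 ∪ Aset ξ p ℓ 1) :=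
  Set.union_comm _ _

lemma Aset_zero_union_one (ξ : ℤ → Fin 2) (p : ℕ → ℕ) (ℓ : ℕ) :
    Aset ξ p ℓ 0 ∪ Aset ξ p ℓ 1 = (Int.cast : ℤ → ZMod (p ℓ)) '' Per ξ (p ℓ) := by
  ext c
  constructor
  · rintro (⟨k, hk, -, rfl⟩ | ⟨k, hk, -, rfl⟩) <;> exact ⟨k, hk, rfl⟩
  · rintro ⟨k, hk, rfl⟩
    rcases Fin.exists_fin_two.1 ⟨ξ k, rfl⟩ with h | h
    · exact Or.inl ⟨k, hk, h, rfl⟩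
    · exact Or.inr ⟨k, hk, h, rfl⟩

lemma intCast_image_Per_eq_image_Ico (ξ : ℤ → Fin 2) {q : ℕ} (hq : 0 < q) :
    (Int.cast : ℤ → ZMod q) '' Per ξ q = (Int.cast : ℤ → ZMod q) '' (Per ξ q ∩ Set.Ico 0 q) := by
  refine subset_antisymm ?_ (Set.image_mono Set.inter_subset_left)
  rintro _ ⟨k, hk, rfl⟩
  have hq' : (q : ℤ) ≠ 0 := by exact_mod_cast hq.ne'
  refine ⟨k % q, ⟨(mem_Per_of_modEq hk (Int.mod_modEq k q)).1, ?_⟩, ZMod.intCast_mod k q⟩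
  exact ⟨Int.emod_nonneg k hq', Int.emod_lt_of_pos k (by omega)⟩

lemma injOn_intCast_Ico (q : ℕ) :
    Set.InjOn (Int.cast : ℤ → ZMod q) (Set.Ico 0 q) := by
  intro a ha b hb hab
  rwa [ZMod.intCast_eq_intCast_iff', Int.emod_eq_of_lt ha.1 ha.2,
    Int.emod_eq_of_lt hb.1 hb.2] at hab

lemma ncard_compl_Aset_union {ξ : ℤ → Fin 2} {p : ℕ → ℕ} {ℓ : ℕ} (hp : 0 < p ℓ) :
    ((Aset ξ p ℓ 0 ∪ Aset ξ p ℓ 1)ᶜ : Set (ZMod (p ℓ))).ncard =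
      p ℓ - (Per ξ (p ℓ) ∩ Set.Ico (0 : ℤ) (p ℓ : ℤ)).ncard := by
  have : NeZero (p ℓ) := ⟨hp.ne'⟩
  rw [Set.ncard_compl, Nat.card_zmod, Aset_zero_union_one, intCast_image_Per_eq_image_Ico ξ hp,
    ((injOn_intCast_Ico _).mono Set.inter_subset_right).ncard_image]

lemma ncard_Per_inter_Ico_le (ξ : ℤ → Fin 2) (q : ℕ) :
    (Per ξ q ∩ Set.Ico (0 : ℤ) q).ncard ≤ q := by
  calc (Per ξ q ∩ Set.Ico (0 : ℤ) q).ncard ≤ (Set.Ico (0 : ℤ) q).ncard :=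
        Set.ncard_le_ncard Set.inter_subset_right (Set.finite_Ico _ _)
    _ = q := by rw [← Finset.coe_Ico, Set.ncard_coe_finset]; simp

lemma cast_sub_ncard_Per_eq (ξ : ℤ → Fin 2) {q : ℕ} (hq : 0 < q) :
    ((q - (Per ξ q ∩ Set.Ico (0 : ℤ) q).ncard : ℕ) : ℝ) = (1 - skelDensity ξ q) * q := by
  have hq' : (q : ℝ) ≠ 0 := by exact_mod_cast hq.ne'
  rw [Nat.cast_sub (ncard_Per_inter_Ico_le ξ q), skelDensity]
  field_simp

theorem toeplitz_boundary_cover_general (ξ : ℤ → Fin 2) (p : ℕ → ℕ) (hps : IsPeriodStructure ξ p) :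
    ∀ ℓ : ℕ,
      frontier (Wset ξ p) ⊆ (UsetL ξ p ℓ ∪ VsetL ξ p ℓ)ᶜ ∧
      (UsetL ξ p ℓ ∪ VsetL ξ p ℓ)ᶜ =
        ⋃ c ∈ (Aset ξ p ℓ 0 ∪ Aset ξ p ℓ 1)ᶜ,
          {x : odometer p | (x : Π ℓ, ZMod (p ℓ)) ℓ = c} ∧
      ((Aset ξ p ℓ 0 ∪ Aset ξ p ℓ 1)ᶜ : Set (ZMod (p ℓ))).ncard =
        p ℓ - (Per ξ (p ℓ) ∩ Set.Ico (0 : ℤ) (p ℓ : ℤ)).ncard ∧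
      ((((Aset ξ p ℓ 0 ∪ Aset ξ p ℓ 1)ᶜ : Set (ZMod (p ℓ))).ncard : ℝ) =
        (1 - skelDensity ξ (p ℓ)) * p ℓ) := by
  obtain ⟨hpos, hdvd, -⟩ := hps
  intro ℓ
  have hcard := ncard_compl_Aset_union (ξ := ξ) (hpos ℓ)
  refine ⟨frontier_Wset_subset hdvd ℓ, ?_, hcard, ?_⟩
  · rw [UsetL_union_VsetL, ← Set.preimage_compl, ← Set.biUnion_preimage_singleton]
    rfl
  · rw [hcard, cast_sub_ncard_Per_eq ξ (hpos ℓ)]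

/-- For a non-periodic Toeplitz sequence `ξ` with period structure
`(p ℓ)` and window `W = cl U`: (i) `∂W ⊆ Ω \ (U_ℓ ∪ V_ℓ)`;
(ii) `Ω \ (U_ℓ ∪ V_ℓ)` is the union of the level-`ℓ` cylinders `{x : x ℓ = c}` with
`c ∉ A_0(ℓ) ∪ A_1(ℓ)`, whose number is exactly
`p ℓ - #(Per(p ℓ, ξ) ∩ [0, p ℓ - 1]) = (1 - D(p ℓ)) · p ℓ`.
In particular `∂W` is covered by `(1 - D(p ℓ)) · p ℓ` level-`ℓ` cylinders. -/
theorem toeplitz_boundary_cover (ξ : ℤ → Fin 2) (hT : IsToeplitz ξ)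
    (hNP : IsNonPeriodic ξ) (p : ℕ → ℕ) (hps : IsPeriodStructure ξ p) :
    ∀ ℓ : ℕ,
      frontier (Wset ξ p) ⊆ (UsetL ξ p ℓ ∪ VsetL ξ p ℓ)ᶜ ∧
      (UsetL ξ p ℓ ∪ VsetL ξ p ℓ)ᶜ =
        ⋃ c ∈ (Aset ξ p ℓ 0 ∪ Aset ξ p ℓ 1)ᶜ,
          {x : odometer p | (x : Π ℓ, ZMod (p ℓ)) ℓ = c} ∧
      ((Aset ξ p ℓ 0 ∪ Aset ξ p ℓ 1)ᶜ : Set (ZMod (p ℓ))).ncard =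
        p ℓ - (Per ξ (p ℓ) ∩ Set.Ico (0 : ℤ) (p ℓ : ℤ)).ncard ∧
      ((((Aset ξ p ℓ 0 ∪ Aset ξ p ℓ 1)ᶜ : Set (ZMod (p ℓ))).ncard : ℝ) =
        (1 - skelDensity ξ (p ℓ)) * p ℓ) :=
  toeplitz_boundary_cover_general ξ p hps
end
end
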